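/- Let M = (G, π) be an ACGS with π : Ag → {IR, ir}, let A ⊆ Ag, and let ⟨⟨A⟩⟩ψ be a simple ATL formula whose path formula ψ is of the form X b, b1 U b2 or b1 R b2 with b, b1, b2 Boolean combinations of atomic propositions. Let M*_s = (G*, π*) be the tree-unfolding of M from a state s, where π*(i) = Ir if π(i) = IR and i ∈ A, and π*(i) = π(i) otherwise. Then M, s ⊨ ⟨⟨A⟩⟩ψ if and only if M*_s, s ⊨ ⟨⟨A⟩⟩ψ. -/
import Mathlib


namespace ACGS

/-- Strategy types: perfect/imperfect information (`I`/`i`) and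
perfect/imperfect recall (`R`/`r`). -/
inductive SType where
  | IR | Ir | iR | ir
deriving DecidableEq

/-- A concurrent game structure. -/
structure CGS (S Agt AP : Type) (Ac : Agt → Type) where
  init : Set S
  sim : Agt → S → S → Prop
  sim_equiv : ∀ i, Equivalence (sim i)
  prot : (i : Agt) → S → Set (Ac i)
  prot_nonempty : ∀ i s, (prot i s).Nonempty
  prot_sim : ∀ i s s', sim i s s' → prot i s = prot i s'
  trans : S → ((i : Agt) → Ac i) → S
  label : S → Set AP

variable {S Agt AP : Type} {Ac : Agt → Type}

/-- A history: a nonempty list of states, most recent state first. -/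
abbrev Hist (S : Type) : Type := { l : List S // l ≠ [] }

/-- The current (last) state of a history. -/
def Hist.cur (h : Hist S) : S := h.1.head h.2

def Hist.one (s : S) : Hist S := ⟨[s], by simp⟩

def Hist.cons (s : S) (h : Hist S) : Hist S := ⟨s :: h.1, by simp⟩

/-- Indistinguishability of (equal-length) histories for agent `i`:
componentwise epistemic accessibility. -/
def Hist.sim (G : CGS S Agt AP Ac) (i : Agt) (h h' : Hist S) : Prop :=
  List.Forall₂ (G.sim i) h.1 h'.1

/-- A strategy of agent `i` (a priori with perfect information and perfect recall):
a protocol-respecting function from histories to local actions. -/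
structure Strat (G : CGS S Agt AP Ac) (i : Agt) where
  act : Hist S → Ac i
  legal : ∀ h, act h ∈ G.prot i h.cur

/-- `θ` is a `σ`-strategy of agent `i`.  `Ir`- and `ir`-strategies are (extensions
to histories of) functions of the last state, `iR`-strategies respect history
indistinguishability, `ir`-strategies moreover respect state indistinguishability. -/
def StratOfType (G : CGS S Agt AP Ac) (i : Agt) : SType → Strat G i → Prop
  | .IR, _ => True
  | .Ir, θ => ∀ h h', h.cur = h'.cur → θ.act h = θ.act h'
  | .iR, θ => ∀ h h', Hist.sim G i h h' → θ.act h = θ.act h'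
  | .ir, θ => ∀ h h', G.sim i h.cur h'.cur → θ.act h = θ.act h'

/-- A full strategy profile. -/
def Profile (G : CGS S Agt AP Ac) := ∀ i, Strat G i

/-- The history of the unique play from `s` where all agents follow `η`. -/
def playHist (G : CGS S Agt AP Ac) (η : Profile G) (s : S) : ℕ → Hist S
  | 0 => Hist.one s
  | n+1 =>
    let h := playHist G η s n
    Hist.cons (G.trans h.cur fun i => (η i).act h) h

/-- The unique play from `s` where every agent follows the profile `η`. -/
def play (G : CGS S Agt AP Ac) (η : Profile G) (s : S) (n : ℕ) : S :=
  (playHist G η s n).cur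

/-- An agents' abilities augmented concurrent game structure (ACGS):
a CGS together with a strategy type for each agent; the epistemic
accessibility relation of perfect-information agents is the identity. -/
structure ACGSModel (S Agt AP : Type) (Ac : Agt → Type) where
  G : CGS S Agt AP Ac
  pi : Agt → SType
  sim_id : ∀ i, (pi i = .IR ∨ pi i = .Ir) → ∀ s s', G.sim i s s' → s = s'

/-- A collective strategy of the coalition `A`. -/
def CollStrat (M : ACGSModel S Agt AP Ac) (A : Set Agt) : Type :=
  ∀ i, i ∈ A → Strat M.G i

/-- Each member of the coalition uses a strategy of its declared type. -/
def CollOk (M : ACGSModel S Agt AP Ac) (A : Set Agt) (ξ : CollStrat M A) : Prop :=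
  ∀ i (h : i ∈ A), StratOfType M.G i (M.pi i) (ξ i h)

/-- Outcomes in an ACGS: plays from `s` in which each `i ∈ A` follows `ξ i`
and each agent outside `A` follows some `π(i)`-strategy. -/
def outcomesM (M : ACGSModel S Agt AP Ac) (s : S) (A : Set Agt) (ξ : CollStrat M A) :
    Set (ℕ → S) :=
  { ρ | ∃ η : Profile M.G, (∀ i (h : i ∈ A), η i = ξ i h) ∧
      (∀ i, i ∉ A → StratOfType M.G i (M.pi i) (η i)) ∧ ρ = play M.G η s }

/-- A collective strategy of `A` in a plain CGS. -/
def CollStratC (G : CGS S Agt AP Ac) (A : Set Agt) : Type :=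
  ∀ i, i ∈ A → Strat G i

/-- A collective `σ`-strategy. -/
def CollOkC (G : CGS S Agt AP Ac) (σ : SType) (A : Set Agt) (ξ : CollStratC G A) : Prop :=
  ∀ i (h : i ∈ A), StratOfType G i σ (ξ i h)

/-- Outcomes in a plain CGS: plays from `s` in which each `i ∈ A` follows `ξ i`
and each agent outside `A` follows an arbitrary (`IR`-) strategy. -/
def outcomesC (G : CGS S Agt AP Ac) (s : S) (A : Set Agt) (ξ : CollStratC G A) :
    Set (ℕ → S) :=
  { ρ | ∃ η : Profile G, (∀ i (h : i ∈ A), η i = ξ i h) ∧ ρ = play G η s }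


/-- LTL formulas over atomic propositions `AP`, built from atoms by
`¬`, `∧`, `X` (next), `U` (until) and `R` (release). -/
inductive LTL (AP : Type) where
  | atom : AP → LTL AP
  | neg : LTL AP → LTL AP
  | conj : LTL AP → LTL AP → LTL AP
  | next : LTL AP → LTL AP
  | untl : LTL AP → LTL AP → LTL AP
  | rels : LTL AP → LTL AP → LTL AP

/-- Satisfaction of an LTL formula on an ω-word over `2^AP`. -/
def ltlSatW : (ℕ → Set AP) → LTL AP → Prop
  | w, .atom q => q ∈ w 0
  | w, .neg φ => ¬ ltlSatW w φ
  | w, .conj φ ψ => ltlSatW w φ ∧ ltlSatW w ψ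
  | w, .next φ => ltlSatW (fun n => w (n+1)) φ
  | w, .untl φ ψ => ∃ k, ltlSatW (fun n => w (n+k)) ψ ∧ ∀ j < k, ltlSatW (fun n => w (n+j)) φ
  | w, .rels φ ψ => ∀ k, (∀ j < k, ¬ ltlSatW (fun n => w (n+j)) φ) → ltlSatW (fun n => w (n+k)) ψ

/-- Satisfaction of an LTL formula on a path of a labelled structure. -/
def ltlSat (label : S → Set AP) (ρ : ℕ → S) (φ : LTL AP) : Prop :=
  ltlSatW (fun n => label (ρ n)) φ


/-- `M, s ⊨ ⟨⟨A⟩⟩ψ` for a simple ATL/ATL* formula whose body `ψ` is an LTL formula: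
the coalition `A` has a collective strategy (of the declared types) such that
every outcome satisfies `ψ`. -/
def simpleSat (M : ACGSModel S Agt AP Ac) (A : Set Agt) (ψ : LTL AP) (s : S) : Prop :=
  ∃ ξ : CollStrat M A, CollOk M A ξ ∧ ∀ ρ ∈ outcomesM M s A ξ, ltlSat M.G.label ρ ψ

/-- `b` is a Boolean combination of atomic propositions. -/
def IsBool : LTL AP → Prop
  | .atom _ => True
  | .neg b => IsBool b
  | .conj b₁ b₂ => IsBool b₁ ∧ IsBool b₂
  | _ => False

/-- `ψ` is of the form `X b`, `b₁ U b₂` or `b₁ R b₂` with `b, b₁, b₂`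
Boolean combinations of atomic propositions. -/
def SimpleShape (ψ : LTL AP) : Prop :=
  (∃ b, IsBool b ∧ ψ = .next b) ∨
  (∃ b₁ b₂, IsBool b₁ ∧ IsBool b₂ ∧ ψ = .untl b₁ b₂) ∨
  (∃ b₁ b₂, IsBool b₁ ∧ IsBool b₂ ∧ ψ = .rels b₁ b₂)

open Classical in
/-- The tree-unfolding of the ACGS `M` relative to the coalition `A`
(for `π : Ag → {IR, ir}`): states are finite nonempty sequences of states of `M`;
`π*(i) = Ir` if `π(i) = IR` and `i ∈ A`, else `π*(i) = π(i)`;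
`ρ ∼*ᵢ ρ'` iff `last ρ ∼ᵢ last ρ'` when `π(i) ≠ IR` and iff `ρ = ρ'` when
`π(i) = IR`; protocols, labelling and transitions are inherited via last states,
with `Δ*(ρ, a) = ρ · Δ(last ρ, a)`. -/
noncomputable def unfoldM (M : ACGSModel S Agt AP Ac) (A : Set Agt)
    (hty : ∀ i, M.pi i = .IR ∨ M.pi i = .ir) : ACGSModel (Hist S) Agt AP Ac where
  G :=
    { init := { h | h.cur ∈ M.G.init }
      sim := fun i h h' => if M.pi i = .IR then h = h' else M.G.sim i h.cur h'.cur
      sim_equiv := by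
        intro i
        by_cases hIR : M.pi i = .IR
        · simp only [if_pos hIR]
          exact eq_equivalence
        · simp only [if_neg hIR]
          exact ⟨fun h => (M.G.sim_equiv i).refl h.cur,
            fun h => (M.G.sim_equiv i).symm h,
            fun h h' => (M.G.sim_equiv i).trans h h'⟩
      prot := fun i h => M.G.prot i h.cur
      prot_nonempty := fun i h => M.G.prot_nonempty i h.cur
      prot_sim := by
        intro i h h' hsim
        by_cases hIR : M.pi i = .IR
        · simp only [if_pos hIR] at hsim
          rw [hsim]
        · simp only [if_neg hIR] at hsim
          exact M.G.prot_sim i h.cur h'.cur hsim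
      trans := fun h a => Hist.cons (M.G.trans h.cur a) h
      label := fun h => M.G.label h.cur }
  pi := fun i => if M.pi i = .IR ∧ i ∈ A then .Ir else M.pi i
  sim_id := by
    intro i hi h h' hsim
    by_cases hIR : M.pi i = .IR
    · simpa only [if_pos hIR] using hsim
    · exfalso
      rcases hty i with h1 | h1
      · exact hIR h1
      · have : ¬ (M.pi i = SType.IR ∧ i ∈ A) := fun hc => hIR hc.1
        simp only [if_neg this, h1] at hi
        rcases hi with hi | hi <;> exact SType.noConfusion hi

/-! ### Auxiliaries for the unfolding theorem -/

/-- Extensionality for strategies. -/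
theorem Strat.ext' {G : CGS S Agt AP Ac} {i : Agt} {θ θ' : Strat G i}
    (h : ∀ x, θ.act x = θ'.act x) : θ = θ' := by
  cases θ; cases θ'
  simp only [Strat.mk.injEq]
  funext x; exact h x

/-- The list of nonempty suffixes of a list. -/
def eList : List S → List (Hist S)
  | [] => []
  | x :: xs => ⟨x :: xs, by simp⟩ :: eList xs

theorem eList_ne {l : List S} (h : l ≠ []) : eList l ≠ [] := by
  cases l with
  | nil => exact absurd rfl h
  | cons x xs => simp [eList]

/-- The canonical history-of-histories associated to a history. -/
def eH (h : Hist S) : Hist (Hist S) := ⟨eList h.1, eList_ne h.2⟩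

theorem eH_cur (h : Hist S) : (eH h).cur = h := by
  obtain ⟨l, hl⟩ := h
  cases l with
  | nil => exact absurd rfl hl
  | cons x xs => rfl

theorem eH_cons (x : S) (h : Hist S) : eH (Hist.cons x h) = Hist.cons (Hist.cons x h) (eH h) := by
  obtain ⟨l, hl⟩ := h
  rfl

theorem eH_one (s : S) : eH (Hist.one s) = Hist.one (Hist.one s) := rfl

theorem unfold_prot {M : ACGSModel S Agt AP Ac} {A : Set Agt}
    {hty : ∀ i, M.pi i = .IR ∨ M.pi i = .ir} (i : Agt) (h : Hist S) :
    (unfoldM M A hty).G.prot i h = M.G.prot i h.cur := rfl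

/-- Key lemma: plays in the unfolding correspond to plays in the original model. -/
theorem playHist_unfold {M : ACGSModel S Agt AP Ac} {A : Set Agt}
    {hty : ∀ i, M.pi i = .IR ∨ M.pi i = .ir}
    (η : Profile M.G) (ηu : Profile (unfoldM M A hty).G)
    (hcomp : ∀ i h, (η i).act h = (ηu i).act (eH h)) (s : S) :
    ∀ n, playHist (unfoldM M A hty).G ηu (Hist.one s) n = eH (playHist M.G η s n) := by
  intro n
  induction n with
  | zero => exact (eH_one s).symm
  | succ n ih =>
    show Hist.cons _ _ = _
    rw [ih]
    have hc : (eH (playHist M.G η s n)).cur = playHist M.G η s n := eH_cur _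
    show Hist.cons ((unfoldM M A hty).G.trans (eH (playHist M.G η s n)).cur
        fun i => (ηu i).act (eH (playHist M.G η s n))) (eH (playHist M.G η s n)) = _
    have hact : (fun i => (ηu i).act (eH (playHist M.G η s n))) =
        fun i => (η i).act (playHist M.G η s n) := by
      funext i; exact (hcomp i _).symm
    rw [hc, hact]
    show Hist.cons (Hist.cons (M.G.trans (playHist M.G η s n).cur
        fun i => (η i).act (playHist M.G η s n)) (playHist M.G η s n)) _ = _
    rw [show playHist M.G η s (n+1) = Hist.cons (M.G.trans (playHist M.G η s n).cur
        fun i => (η i).act (playHist M.G η s n)) (playHist M.G η s n) from rfl, eH_cons]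

theorem play_unfold {M : ACGSModel S Agt AP Ac} {A : Set Agt}
    {hty : ∀ i, M.pi i = .IR ∨ M.pi i = .ir}
    (η : Profile M.G) (ηu : Profile (unfoldM M A hty).G)
    (hcomp : ∀ i h, (η i).act h = (ηu i).act (eH h)) (s : S) (n : ℕ) :
    play (unfoldM M A hty).G ηu (Hist.one s) n = playHist M.G η s n := by
  unfold play
  rw [playHist_unfold η ηu hcomp s n, eH_cur]

theorem play_unfold_cur {M : ACGSModel S Agt AP Ac} {A : Set Agt}
    {hty : ∀ i, M.pi i = .IR ∨ M.pi i = .ir}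
    (η : Profile M.G) (ηu : Profile (unfoldM M A hty).G)
    (hcomp : ∀ i h, (η i).act h = (ηu i).act (eH h)) (s : S) (n : ℕ) :
    (play (unfoldM M A hty).G ηu (Hist.one s) n).cur = play M.G η s n := by
  rw [play_unfold η ηu hcomp s n]; rfl

open Classical in
theorem unfold_pi {M : ACGSModel S Agt AP Ac} {A : Set Agt}
    {hty : ∀ i, M.pi i = .IR ∨ M.pi i = .ir} (i : Agt) :
    (unfoldM M A hty).pi i = if M.pi i = .IR ∧ i ∈ A then .Ir else M.pi i := rfl

theorem unfold_sim {M : ACGSModel S Agt AP Ac} {A : Set Agt}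
    {hty : ∀ i, M.pi i = .IR ∨ M.pi i = .ir} (i : Agt) (h h' : Hist S) :
    (unfoldM M A hty).G.sim i h h' =
      (if M.pi i = .IR then h = h' else M.G.sim i h.cur h'.cur) := rfl

/-- For an ACGS `M = (G, π)` with `π : Ag → {IR, ir}` and a simple ATL formula
`⟨⟨A⟩⟩ψ` whose body is of the form `X b`, `b₁ U b₂` or `b₁ R b₂` for Boolean
combinations of atoms:  `M, s ⊨ ⟨⟨A⟩⟩ψ` iff `M*_s, s ⊨ ⟨⟨A⟩⟩ψ`, where `M*_s` is
the tree-unfolding of `M` from `s` (relative to `A`) and `s` is identified with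
the one-element sequence. -/
theorem simple_atl_unfolding {S Agt AP : Type} {Ac : Agt → Type}
    (M : ACGSModel S Agt AP Ac) (A : Set Agt)
    (hty : ∀ i, M.pi i = .IR ∨ M.pi i = .ir)
    (ψ : LTL AP) (hψ : SimpleShape ψ) (s : S) :
    simpleSat M A ψ s ↔ simpleSat (unfoldM M A hty) A ψ (Hist.one s) := by
  clear hψ
  constructor
  · rintro ⟨ξ, hξok, hξ⟩
    -- build the collective strategy in the unfolding
    refine ⟨fun i hi => ⟨fun H => (ξ i hi).act H.cur, fun H => (ξ i hi).legal H.cur⟩, ?_, ?_⟩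
    · intro i hi
      rcases hty i with hIR | hir
      · have hpi : (unfoldM M A hty).pi i = .Ir := by
          rw [unfold_pi, if_pos ⟨hIR, hi⟩]
        rw [hpi]
        intro H H' hcur
        simp only [hcur]
      · have hcond : ¬ (M.pi i = .IR ∧ i ∈ A) := by
          rintro ⟨h1, _⟩; rw [hir] at h1; exact SType.noConfusion h1
        have hpi : (unfoldM M A hty).pi i = .ir := by
          rw [unfold_pi, if_neg hcond, hir]
        rw [hpi]
        intro H H' hsim
        rw [unfold_sim] at hsim
        have hne : M.pi i ≠ .IR := by rw [hir]; exact fun h => SType.noConfusion h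
        rw [if_neg hne] at hsim
        have := hξok i hi
        rw [hir] at this
        exact this H.cur H'.cur hsim
    · rintro ρu ⟨ηu, hηuA, hηuT, rfl⟩
      -- build the corresponding profile in M
      set η : Profile M.G := fun i =>
        ⟨fun h => (ηu i).act (eH h), fun h => by
          have := (ηu i).legal (eH h)
          rw [unfold_prot, eH_cur] at this
          exact this⟩ with hη
      have hcomp : ∀ i h, (η i).act h = (ηu i).act (eH h) := fun i h => rfl
      have hmem : play M.G η s ∈ outcomesM M s A ξ := by
        refine ⟨η, ?_, ?_, rfl⟩
        · intro i hi
          apply Strat.ext'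
          intro h
          show (ηu i).act (eH h) = (ξ i hi).act h
          rw [hηuA i hi]
          show (ξ i hi).act (eH h).cur = _
          rw [eH_cur]
        · intro i hi
          rcases hty i with hIR | hir
          · rw [hIR]; trivial
          · rw [hir]
            intro h h' hsim
            have hcond : ¬ (M.pi i = .IR ∧ i ∈ A) := by
              rintro ⟨h1, _⟩; rw [hir] at h1; exact SType.noConfusion h1
            have := hηuT i hi
            rw [unfold_pi, if_neg hcond, hir] at this
            have hne : M.pi i ≠ .IR := by rw [hir]; exact fun h => SType.noConfusion h
            have hsimu : (unfoldM M A hty).G.sim i (eH h).cur (eH h').cur := by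
              rw [unfold_sim, if_neg hne, eH_cur, eH_cur]
              exact hsim
            exact this (eH h) (eH h') hsimu
      have hsat := hξ _ hmem
      unfold ltlSat at hsat ⊢
      have hw : (fun n => (unfoldM M A hty).G.label (play (unfoldM M A hty).G ηu (Hist.one s) n))
          = fun n => M.G.label (play M.G η s n) := by
        funext n
        show M.G.label (play (unfoldM M A hty).G ηu (Hist.one s) n).cur = _
        rw [play_unfold_cur η ηu hcomp s n]
      rw [hw]
      exact hsat
  · rintro ⟨ξu, hξuok, hξu⟩
    refine ⟨fun i hi => ⟨fun h => (ξu i hi).act (eH h), fun h => by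
        have := (ξu i hi).legal (eH h)
        rw [unfold_prot, eH_cur] at this
        exact this⟩, ?_, ?_⟩
    · intro i hi
      rcases hty i with hIR | hir
      · rw [hIR]; trivial
      · rw [hir]
        intro h h' hsim
        show (ξu i hi).act (eH h) = (ξu i hi).act (eH h')
        have hcond : ¬ (M.pi i = .IR ∧ i ∈ A) := by
          rintro ⟨h1, _⟩; rw [hir] at h1; exact SType.noConfusion h1
        have := hξuok i hi
        rw [unfold_pi, if_neg hcond, hir] at this
        have hne : M.pi i ≠ .IR := by rw [hir]; exact fun h => SType.noConfusion h
        refine this (eH h) (eH h') ?_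
        rw [unfold_sim, if_neg hne, eH_cur, eH_cur]
        exact hsim
    · rintro ρ ⟨η, hηA, hηT, rfl⟩
      -- build the corresponding profile in the unfolding
      set ηu : Profile (unfoldM M A hty).G := fun i =>
        ⟨fun H => (η i).act H.cur, fun H => by
          rw [unfold_prot]
          exact (η i).legal H.cur⟩ with hηu
      have hcomp : ∀ i h, (η i).act h = (ηu i).act (eH h) := by
        intro i h
        show _ = (η i).act (eH h).cur
        rw [eH_cur]
      have hmem : play (unfoldM M A hty).G ηu (Hist.one s) ∈
          outcomesM (unfoldM M A hty) (Hist.one s) A ξu := by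
        refine ⟨ηu, ?_, ?_, rfl⟩
        · intro i hi
          apply Strat.ext'
          intro H
          show (η i).act H.cur = (ξu i hi).act H
          rw [hηA i hi]
          show (ξu i hi).act (eH H.cur) = (ξu i hi).act H
          have hok := hξuok i hi
          rcases hty i with hIR | hir
          · rw [unfold_pi, if_pos ⟨hIR, hi⟩] at hok
            exact hok (eH H.cur) H (eH_cur H.cur)
          · have hcond : ¬ (M.pi i = .IR ∧ i ∈ A) := by
              rintro ⟨h1, _⟩; rw [hir] at h1; exact SType.noConfusion h1
            rw [unfold_pi, if_neg hcond, hir] at hok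
            have hne : M.pi i ≠ .IR := by rw [hir]; exact fun h => SType.noConfusion h
            refine hok (eH H.cur) H ?_
            rw [unfold_sim, if_neg hne, eH_cur]
            exact (M.G.sim_equiv i).refl _
        · intro i hi
          rcases hty i with hIR | hir
          · have hcond : ¬ (M.pi i = .IR ∧ i ∈ A) := fun hc => hi hc.2
            rw [unfold_pi, if_neg hcond, hIR]; trivial
          · have hcond : ¬ (M.pi i = .IR ∧ i ∈ A) := by
              rintro ⟨h1, _⟩; rw [hir] at h1; exact SType.noConfusion h1
            rw [unfold_pi, if_neg hcond, hir]
            intro H H' hsim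
            have hne : M.pi i ≠ .IR := by rw [hir]; exact fun h => SType.noConfusion h
            rw [unfold_sim, if_neg hne] at hsim
            have := hηT i hi
            rw [hir] at this
            exact this H.cur H'.cur hsim
      have hsat := hξu _ hmem
      unfold ltlSat at hsat ⊢
      have hw : (fun n => (unfoldM M A hty).G.label (play (unfoldM M A hty).G ηu (Hist.one s) n))
          = fun n => M.G.label (play M.G η s n) := by
        funext n
        show M.G.label (play (unfoldM M A hty).G ηu (Hist.one s) n).cur = _
        rw [play_unfold_cur η ηu hcomp s n]
      rw [hw] at hsat
      exact hsat

end ACGS
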